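/- Consider the action of SL(2,ℝ) on pairs of real 2×2 symmetric positive-definite matrices given by g.(θ,θ′) = (g⁻ᵀθg⁻¹, g⁻ᵀθ′g⁻¹), and the map S(θ,θ′) = (det θ, det θ′, tr(θ′θ⁻¹)). Then S is a maximal invariant: (i) S(g⁻ᵀθg⁻¹, g⁻ᵀθ′g⁻¹) = S(θ,θ′) for every g ∈ SL(2,ℝ); and (ii) whenever S(θ₁,θ₂) = S(θ₁′,θ₂′) there exists g ∈ SL(2,ℝ) with θ₁′ = g⁻ᵀθ₁g⁻¹ and θ₂′ = g⁻ᵀθ₂g⁻¹. -/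

import Mathlib

/-!
Normalise by congruence: a positive-definite `θ₁` is sent to `1` by some `P` with `det P > 0`,
and then `θ₂` becomes the symmetric matrix `P θ₂ Pᵀ`, whose characteristic polynomial is that of
`θ₂ θ₁⁻¹`. Symmetric matrices with equal characteristic polynomials are conjugate under `SO(n)`,
which fixes `1`, and `det P` is pinned down by `det θ₁` because `(det P)² det θ₁ = 1`. In
dimension two the characteristic polynomial of `θ₂ θ₁⁻¹` is `X² - tr(θ₂ θ₁⁻¹) X + det θ₂ / det θ₁`.
-/

open Matrix

namespace Matrix

variable {n : Type*} [Fintype n] [DecidableEq n]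

section CommRing

variable {R : Type*} [CommRing R]

lemma inv_eq_transpose_mul_of_mul_mul_transpose_eq_one {θ P : Matrix n n R}
    (hP : P * θ * Pᵀ = 1) : θ⁻¹ = Pᵀ * P :=
  inv_eq_left_inv <| by rw [mul_assoc]; exact mul_eq_one_comm.mp hP

lemma det_sq_mul_det_of_mul_mul_transpose_eq_one {θ P : Matrix n n R}
    (hP : P * θ * Pᵀ = 1) : P.det ^ 2 * θ.det = 1 := by
  simpa [det_mul, det_transpose, sq, mul_comm, mul_left_comm] using congrArg det hP

lemma charpoly_mul_mul_transpose_of_mul_mul_transpose_eq_one {θ P : Matrix n n R}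
    (hP : P * θ * Pᵀ = 1) (θ' : Matrix n n R) :
    (P * θ' * Pᵀ).charpoly = (θ' * θ⁻¹).charpoly := by
  rw [inv_eq_transpose_mul_of_mul_mul_transpose_eq_one hP, mul_assoc, charpoly_mul_comm,
    mul_assoc]

lemma inv_mul_mul_mul_transpose_eq_of_mul_mul_transpose_eq {θ θ' A B : Matrix n n R}
    (hB : IsUnit B.det) (h : A * θ * Aᵀ = B * θ' * Bᵀ) :
    B⁻¹ * A * θ * (B⁻¹ * A)ᵀ = θ' := by
  have hBt : IsUnit Bᵀ.det := by rwa [det_transpose]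
  calc B⁻¹ * A * θ * (B⁻¹ * A)ᵀ = B⁻¹ * (A * θ * Aᵀ) * (Bᵀ)⁻¹ := by
        rw [transpose_mul, transpose_nonsing_inv]; noncomm_ring
    _ = (B⁻¹ * B) * θ' * (Bᵀ * (Bᵀ)⁻¹) := by rw [h]; noncomm_ring
    _ = θ' := by rw [nonsing_inv_mul B hB, mul_nonsing_inv Bᵀ hBt, one_mul, mul_one]

lemma det_inv_transpose_mul_mul_inv {g : Matrix n n R} (hg : g.det = 1) (θ : Matrix n n R) :
    ((g⁻¹)ᵀ * θ * g⁻¹).det = θ.det := by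
  simp [det_mul, det_transpose, det_nonsing_inv, hg]

lemma trace_inv_transpose_mul_mul_inv_mul_inv {g : Matrix n n R} (hg : IsUnit g.det)
    (θ θ' : Matrix n n R) :
    ((g⁻¹)ᵀ * θ' * g⁻¹ * ((g⁻¹)ᵀ * θ * g⁻¹)⁻¹).trace = (θ' * θ⁻¹).trace := by
  have hgt : IsUnit gᵀ.det := by rwa [det_transpose]
  calc ((g⁻¹)ᵀ * θ' * g⁻¹ * ((g⁻¹)ᵀ * θ * g⁻¹)⁻¹).trace
      = ((g⁻¹)ᵀ * θ' * (g⁻¹ * g) * θ⁻¹ * gᵀ).trace := by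
        rw [mul_inv_rev, mul_inv_rev, nonsing_inv_nonsing_inv g hg, transpose_nonsing_inv,
          nonsing_inv_nonsing_inv gᵀ hgt]
        noncomm_ring
    _ = ((gᵀ * (g⁻¹)ᵀ) * (θ' * θ⁻¹)).trace := by
        rw [nonsing_inv_mul g hg, mul_one, trace_mul_comm]; noncomm_ring
    _ = (θ' * θ⁻¹).trace := by
        rw [← transpose_mul, nonsing_inv_mul g hg, transpose_one, one_mul]

end CommRing

lemma IsHermitian.exists_orthogonal_mul_mul_transpose_eq_diagonal {M : Matrix n n ℝ}
    (hM : M.IsHermitian) :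
    ∃ O : Matrix n n ℝ, O * Oᵀ = 1 ∧ O * M * Oᵀ = diagonal hM.eigenvalues := by
  set U : Matrix n n ℝ := (hM.eigenvectorUnitary : Matrix n n ℝ)
  have hstar : star U = Uᵀ := conjTranspose_eq_transpose_of_trivial _
  refine ⟨Uᵀ, ?_, ?_⟩
  · rw [transpose_transpose, ← hstar, Unitary.coe_star_mul_self]
  · have := hM.conjStarAlgAut_star_eigenvectorUnitary
    rw [Unitary.conjStarAlgAut_star_apply, hstar] at this
    simpa [transpose_transpose, RCLike.ofReal_real_eq_id] using this

lemma IsHermitian.exists_det_eq_one_orthogonal_mul_mul_transpose_eq_diagonal [Nonempty n]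
    {M : Matrix n n ℝ} (hM : M.IsHermitian) :
    ∃ O : Matrix n n ℝ, O.det = 1 ∧ O * Oᵀ = 1 ∧ O * M * Oᵀ = diagonal hM.eigenvalues := by
  obtain ⟨O, hO, hOM⟩ := hM.exists_orthogonal_mul_mul_transpose_eq_diagonal
  have hdet : O.det * O.det = 1 := by
    simpa [det_mul, det_transpose] using congrArg det hO
  rcases mul_self_eq_one_iff.mp hdet with hdet | hdet
  · exact ⟨O, hdet, hO, hOM⟩
  -- a reflection in one coordinate flips the sign of `det O` and fixes every diagonal matrix
  set s : n → ℝ := Function.update 1 (Classical.arbitrary n) (-1)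
  have hs : ∀ j, s j * s j = 1 := fun j => by
    by_cases hj : j = Classical.arbitrary n <;> simp [s, hj]
  have hconj (d : n → ℝ) : diagonal s * diagonal d * (diagonal s)ᵀ = diagonal d := by
    rw [diagonal_transpose, diagonal_mul_diagonal, diagonal_mul_diagonal]
    congr 1; funext j
    linear_combination d j * hs j
  refine ⟨diagonal s * O, ?_, ?_, ?_⟩
  · rw [det_mul, hdet, det_diagonal, Finset.prod_update_of_mem (Finset.mem_univ _)]
    simp
  · rw [transpose_mul, ← mul_assoc, mul_assoc _ O, hO, mul_one]
    simpa using hconj 1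
  · rw [transpose_mul, show diagonal s * O * M * (Oᵀ * (diagonal s)ᵀ)
      = diagonal s * (O * M * Oᵀ) * (diagonal s)ᵀ by noncomm_ring, hOM, hconj]

lemma IsHermitian.exists_det_eq_one_orthogonal_mul_mul_transpose_eq_of_charpoly_eq [Nonempty n]
    {M M' : Matrix n n ℝ} (hM : M.IsHermitian) (hM' : M'.IsHermitian)
    (h : M.charpoly = M'.charpoly) :
    ∃ O : Matrix n n ℝ, O.det = 1 ∧ O * Oᵀ = 1 ∧ O * M * Oᵀ = M' := by
  obtain ⟨O₁, hdet₁, hO₁, hO₁M⟩ := hM.exists_det_eq_one_orthogonal_mul_mul_transpose_eq_diagonal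
  obtain ⟨O₂, hdet₂, hO₂, hO₂M'⟩ := hM'.exists_det_eq_one_orthogonal_mul_mul_transpose_eq_diagonal
  rw [(hM.eigenvalues_eq_eigenvalues_iff hM').2 h, ← hO₂M'] at hO₁M
  have hO₂' : O₂ᵀ * O₂ = 1 := mul_eq_one_comm.mp hO₂
  refine ⟨O₂ᵀ * O₁, by rw [det_mul, det_transpose, hdet₁, hdet₂, one_mul], ?_, ?_⟩
  · rw [transpose_mul, transpose_transpose, mul_assoc, ← mul_assoc O₁, hO₁, one_mul, hO₂']
  · calc O₂ᵀ * O₁ * M * (O₂ᵀ * O₁)ᵀ = O₂ᵀ * (O₁ * M * O₁ᵀ) * O₂ := by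
          rw [transpose_mul, transpose_transpose]; noncomm_ring
      _ = (O₂ᵀ * O₂) * M' * (O₂ᵀ * O₂) := by rw [hO₁M]; noncomm_ring
      _ = M' := by rw [hO₂', one_mul, mul_one]

lemma PosDef.exists_det_pos_mul_mul_transpose_eq_one [Nonempty n] {θ : Matrix n n ℝ}
    (hθ : θ.PosDef) : ∃ P : Matrix n n ℝ, 0 < P.det ∧ P * θ * Pᵀ = 1 := by
  obtain ⟨O, hdet, -, hOθ⟩ := hθ.1.exists_det_eq_one_orthogonal_mul_mul_transpose_eq_diagonal
  set D := diagonal fun i => (√(hθ.1.eigenvalues i))⁻¹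
  refine ⟨D * O, ?_, ?_⟩
  · rw [det_mul, hdet, mul_one, det_diagonal]
    exact Finset.prod_pos fun i _ => inv_pos.2 (Real.sqrt_pos.2 (hθ.eigenvalues_pos i))
  · rw [transpose_mul, show D * O * θ * (Oᵀ * Dᵀ) = D * (O * θ * Oᵀ) * Dᵀ by noncomm_ring, hOθ,
      diagonal_transpose, diagonal_mul_diagonal, diagonal_mul_diagonal, ← diagonal_one]
    congr 1; funext i
    have hμ := hθ.eigenvalues_pos i
    field_simp
    rw [Real.sq_sqrt hμ.le]

theorem exists_det_eq_one_mul_mul_transpose_eq_of_charpoly_eq [Nonempty n]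
    {θ₁ θ₂ θ₁' θ₂' : Matrix n n ℝ} (h₁ : θ₁.PosDef) (h₂ : θ₂.IsHermitian) (h₁' : θ₁'.PosDef)
    (h₂' : θ₂'.IsHermitian) (hdet : θ₁.det = θ₁'.det)
    (hchar : (θ₂ * θ₁⁻¹).charpoly = (θ₂' * θ₁'⁻¹).charpoly) :
    ∃ K : Matrix n n ℝ, K.det = 1 ∧ K * θ₁ * Kᵀ = θ₁' ∧ K * θ₂ * Kᵀ = θ₂' := by
  obtain ⟨P, hPpos, hP⟩ := h₁.exists_det_pos_mul_mul_transpose_eq_one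
  obtain ⟨P', hP'pos, hP'⟩ := h₁'.exists_det_pos_mul_mul_transpose_eq_one
  have hherm {A B : Matrix n n ℝ} (hA : A.IsHermitian) : (B * A * Bᵀ).IsHermitian := by
    simpa [conjTranspose_eq_transpose_of_trivial] using isHermitian_mul_mul_conjTranspose B hA
  obtain ⟨O, hOdet, hO, hON⟩ :=
    (hherm (B := P) h₂).exists_det_eq_one_orthogonal_mul_mul_transpose_eq_of_charpoly_eq
      (hherm (B := P') h₂') (by
        rw [charpoly_mul_mul_transpose_of_mul_mul_transpose_eq_one hP,
          charpoly_mul_mul_transpose_of_mul_mul_transpose_eq_one hP', hchar])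
  have hPP' : P.det = P'.det := by
    refine (pow_left_inj₀ hPpos.le hP'pos.le two_ne_zero).mp (mul_right_cancel₀ h₁.det_pos.ne' ?_)
    rw [det_sq_mul_det_of_mul_mul_transpose_eq_one hP, hdet,
      det_sq_mul_det_of_mul_mul_transpose_eq_one hP']
  have hP'unit : IsUnit P'.det := hP'pos.ne'.isUnit
  have hOP (θ : Matrix n n ℝ) : O * P * θ * (O * P)ᵀ = O * (P * θ * Pᵀ) * Oᵀ := by
    rw [transpose_mul]; noncomm_ring
  refine ⟨P'⁻¹ * (O * P), ?_, ?_, ?_⟩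
  · rw [det_mul, det_mul, det_nonsing_inv, hOdet, one_mul, hPP', Ring.inverse_mul_cancel _ hP'unit]
  · refine inv_mul_mul_mul_transpose_eq_of_mul_mul_transpose_eq hP'unit ?_
    rw [hOP, hP, mul_one, hO, hP']
  · exact inv_mul_mul_mul_transpose_eq_of_mul_mul_transpose_eq hP'unit (by rw [hOP, hON])

end Matrix

theorem maximal_invariant_SL2 :
    (∀ g θ θ' : Matrix (Fin 2) (Fin 2) ℝ, g.det = 1 → θ.PosDef → θ'.PosDef →
      ((g⁻¹)ᵀ * θ * g⁻¹).det = θ.det ∧ ((g⁻¹)ᵀ * θ' * g⁻¹).det = θ'.det ∧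
        (((g⁻¹)ᵀ * θ' * g⁻¹) * ((g⁻¹)ᵀ * θ * g⁻¹)⁻¹).trace = (θ' * θ⁻¹).trace) ∧
    (∀ θ₁ θ₂ θ₁' θ₂' : Matrix (Fin 2) (Fin 2) ℝ,
      θ₁.PosDef → θ₂.PosDef → θ₁'.PosDef → θ₂'.PosDef →
      θ₁.det = θ₁'.det → θ₂.det = θ₂'.det →
      (θ₂ * θ₁⁻¹).trace = (θ₂' * θ₁'⁻¹).trace →
      ∃ g : Matrix (Fin 2) (Fin 2) ℝ, g.det = 1 ∧
        (g⁻¹)ᵀ * θ₁ * g⁻¹ = θ₁' ∧ (g⁻¹)ᵀ * θ₂ * g⁻¹ = θ₂') := by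
  refine ⟨fun g θ θ' hg _ _ => ⟨det_inv_transpose_mul_mul_inv hg θ,
    det_inv_transpose_mul_mul_inv hg θ',
    trace_inv_transpose_mul_mul_inv_mul_inv (by simp [hg]) θ θ'⟩, ?_⟩
  intro θ₁ θ₂ θ₁' θ₂' h₁ h₂ h₁' h₂' hdet₁ hdet₂ htrace
  have hchar : (θ₂ * θ₁⁻¹).charpoly = (θ₂' * θ₁'⁻¹).charpoly := by
    simp only [charpoly_fin_two, det_mul, det_nonsing_inv, htrace, hdet₁, hdet₂]
  obtain ⟨K, hK, hK₁, hK₂⟩ :=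
    exists_det_eq_one_mul_mul_transpose_eq_of_charpoly_eq h₁ h₂.1 h₁' h₂'.1 hdet₁ hchar
  have hKinv : ((Kᵀ)⁻¹)⁻¹ = Kᵀ := nonsing_inv_nonsing_inv _ (by simp [hK])
  exact ⟨(Kᵀ)⁻¹, by simp [hK], by rw [hKinv, transpose_transpose, hK₁],
    by rw [hKinv, transpose_transpose, hK₂]⟩
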